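/- arXiv:math/0701089 — 4 statements merged into one kernel-verified Lean document; each statement's English description precedes it below -/
import Mathlib

section
/- For any positive integer N and any p ∈ [0,1] such that Np is an integer m, if X ~ Binomial(N, p) then P(X ≥ m) ≥ 1/2 and P(X ≤ m) ≥ 1/2; that is, the integer mean m is a median of the binomial distribution. -/
open Finset

/-- P(X = k) for X ~ Binomial(N, p): C(N,k) p^k (1-p)^(N-k). -/
noncomputable def binomialPMF (N : ℕ) (p : ℝ) (k : ℕ) : ℝ :=
  (N.choose k : ℝ) * p ^ k * (1 - p) ^ (N - k)

/-- P(X ≥ m) for X ~ Binomial(N, p). -/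
noncomputable def binomialP_ge (N : ℕ) (p : ℝ) (m : ℕ) : ℝ :=
  ∑ k ∈ Finset.Icc m N, binomialPMF N p k

/-- P(X ≤ m) for X ~ Binomial(N, p). -/
noncomputable def binomialP_le (N : ℕ) (p : ℝ) (m : ℕ) : ℝ :=
  ∑ k ∈ Finset.Icc 0 m, binomialPMF N p k


lemma coeff1 (N k : ℕ) (hk1 : 1 ≤ k) (hkN : k ≤ N) :
    (k : ℝ) * (N.choose k : ℝ) = (N : ℝ) * ((N-1).choose (k-1) : ℝ) := by
  have : N * ((N-1).choose (k-1)) = k * N.choose k := by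
    obtain ⟨n, rfl⟩ := Nat.exists_eq_add_of_le (show 1 ≤ N from le_trans hk1 hkN)
    obtain ⟨j, rfl⟩ := Nat.exists_eq_add_of_le hk1
    simp only [Nat.add_sub_cancel_left, Nat.succ_sub_one]
    rw [add_comm 1 n, add_comm 1 j, show n + 1 = n.succ from rfl,
      show j + 1 = j.succ from rfl, Nat.add_one_mul_choose_eq]
    simp only [Nat.succ_eq_add_one]
    ring
  have := congrArg (fun x : ℕ => (x : ℝ)) this
  push_cast at this
  linarith

lemma coeff2 (N k : ℕ) (hN : 1 ≤ N) :
    ((N - k : ℕ) : ℝ) * (N.choose k : ℝ) = (N : ℝ) * ((N-1).choose k : ℝ) := by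
  have h := Nat.choose_mul_succ_eq (N-1) k
  have h2 : (N-1) + 1 = N := Nat.succ_pred_eq_of_pos hN
  rw [h2] at h
  have := congrArg (fun x : ℕ => (x : ℝ)) h
  push_cast at this
  linarith

lemma hasDerivAt_term (N k : ℕ) (hk1 : 1 ≤ k) (hkN : k ≤ N) (x : ℝ) :
    HasDerivAt (fun y : ℝ => (N.choose k : ℝ) * y ^ k * (1-y) ^ (N-k))
      ((N:ℝ) * ((N-1).choose (k-1) : ℝ) * x^(k-1) * (1-x)^(N-k)
       - (N:ℝ) * ((N-1).choose k : ℝ) * x^k * (1-x)^(N-1-k)) x := by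
  have h1 : HasDerivAt (fun y : ℝ => y ^ k) ((k:ℝ) * x^(k-1)) x := hasDerivAt_pow k x
  have h0 : HasDerivAt (fun y : ℝ => 1 - y) (-1 : ℝ) x := by
    simpa using (hasDerivAt_id x).const_sub 1
  have h2 : HasDerivAt (fun y : ℝ => (1-y)^(N-k))
      (((N-k : ℕ):ℝ) * (1-x)^(N-k-1) * (-1)) x := h0.pow (N-k)
  have h3 : HasDerivAt (fun y : ℝ => (N.choose k : ℝ) * (y ^ k * (1-y)^(N-k))) _ x :=
    (h1.fun_mul h2).const_mul (N.choose k : ℝ)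
  have hc1 := coeff1 N k hk1 hkN
  have hc2 := coeff2 N k (le_trans hk1 hkN)
  have he : N - k - 1 = N - 1 - k := by omega
  convert h3 using 1
  · funext y; ring
  · rw [he] at *
    linear_combination (x^k * (1-x)^(N-1-k)) * hc2 - (x^(k-1)*(1-x)^(N-k)) * hc1

lemma hasDerivAt_tail (N m : ℕ) (hm1 : 1 ≤ m) (hmN : m ≤ N) (x : ℝ) :
    HasDerivAt (fun y : ℝ => ∑ k ∈ Icc m N, (N.choose k : ℝ) * y ^ k * (1-y)^(N-k))
      ((N:ℝ) * ((N-1).choose (m-1):ℝ) * x^(m-1) * (1-x)^(N-m)) x := by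
  set D1 : ℕ → ℝ := fun k => (N:ℝ) * ((N-1).choose (k-1) : ℝ) * x^(k-1) * (1-x)^(N-k) with hD1
  have hsum : HasDerivAt (fun y : ℝ => ∑ k ∈ Icc m N, (N.choose k : ℝ) * y ^ k * (1-y)^(N-k))
      (∑ k ∈ Icc m N, (D1 k - D1 (k+1))) x := by
    apply HasDerivAt.fun_sum
    intro k hk
    simp only [Finset.mem_Icc] at hk
    have := hasDerivAt_term N k (le_trans hm1 hk.1) hk.2 x
    refine this.congr_deriv ?_
    simp only [hD1, Nat.add_sub_cancel]
    have : N - (k+1) = N - 1 - k := by omega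
    rw [this]
  have htel : (∑ k ∈ Icc m N, (D1 k - D1 (k+1))) = D1 m - D1 (N+1) := by
    rw [show Icc m N = Ico m (N+1) by rw [← Finset.Ico_add_one_right_eq_Icc], Finset.sum_Ico_eq_sum_range]
    have h2 : N + 1 - m = (N - m) + 1 := by omega
    rw [h2]
    have := Finset.sum_range_sub' (fun i => D1 (m + i)) (N - m + 1)
    have e1 : D1 (m + 0) = D1 m := by norm_num
    have e2 : D1 (m + (N - m + 1)) = D1 (N + 1) := by congr 1; omega
    rw [e1, e2] at this
    rw [← this]
    apply Finset.sum_congr rfl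
    intro i _
    rfl
  rw [htel] at hsum
  have hz : D1 (N+1) = 0 := by
    simp only [hD1, Nat.add_sub_cancel]
    rw [Nat.choose_eq_zero_of_lt (by omega)]
    simp
  rw [hz, sub_zero] at hsum
  exact hsum

open Real in
lemma key_ineq (μ ν : ℝ) (hμ : 0 < μ) (hμν : μ < ν) (t : ℝ)
    (ht : t ∈ Set.Ico (μ/ν) 1) :
    μ * log ((μ/ν)^2/t) + (ν - μ) * log (1 - (μ/ν)^2/t)
      ≥ μ * log t + (ν - μ) * log (1 - t) := by
  set c : ℝ := μ/ν with hc
  have hν : 0 < ν := hμ.trans hμν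
  have hc0 : 0 < c := div_pos hμ hν
  have hc1 : c < 1 := (div_lt_one hν).2 hμν
  set β : ℝ := ν - μ with hβ
  have hβ0 : 0 < β := by simp [hβ]; linarith
  set L : ℝ → ℝ := fun x => μ * log x + β * log (1 - x) with hL
  have hLd : ∀ x : ℝ, 0 < x → x < 1 → HasDerivAt L (μ/x - β/(1-x)) x := by
    intro x hx0 hx1
    have h1 : HasDerivAt (fun x : ℝ => log x) x⁻¹ x := Real.hasDerivAt_log (ne_of_gt hx0)
    have h0 : HasDerivAt (fun x : ℝ => 1 - x) (-1 : ℝ) x := by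
      simpa using (hasDerivAt_id x).const_sub 1
    have h2 : HasDerivAt (fun x : ℝ => log (1 - x)) ((1-x)⁻¹ * (-1)) x :=
      (Real.hasDerivAt_log (by linarith)).comp x h0
    have : HasDerivAt (fun x => μ * log x + β * log (1 - x)) _ x := (h1.const_mul μ).add (h2.const_mul β)
    convert this using 1
    field_simp
    ring
  set h : ℝ → ℝ := fun t => L (c^2/t) - L t with hh
  -- h has nonneg derivative on Ioo c 1
  have hhd : ∀ s ∈ Set.Ico c 1, HasDerivAt h
      ((μ/(c^2/s) - β/(1-c^2/s)) * (c^2 * (-(s^2)⁻¹)) - (μ/s - β/(1-s))) s := by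
    intro s hs
    obtain ⟨hs1, hs2⟩ := hs
    have hs0 : 0 < s := lt_of_lt_of_le hc0 hs1
    have hu0 : 0 < c^2/s := by positivity
    have hu1 : c^2/s < 1 := by
      calc c^2/s ≤ c^2/c := by
            apply div_le_div_of_nonneg_left (by positivity) hc0 hs1
        _ = c := by field_simp [pow_two]
        _ < 1 := hc1
    have hinner : HasDerivAt (fun t : ℝ => c^2/t) (c^2 * (-(s^2)⁻¹)) s := by
      simpa [div_eq_mul_inv] using (hasDerivAt_inv (ne_of_gt hs0)).const_mul (c^2)
    have houter := hLd (c^2/s) hu0 hu1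
    have hcomp := houter.comp s hinner
    exact hcomp.sub (hLd s hs0 hs2)
  have hmono : MonotoneOn h (Set.Ico c 1) := by
    apply monotoneOn_of_deriv_nonneg (convex_Ico c 1)
    · intro s hs
      exact (hhd s hs).continuousAt.continuousWithinAt
    · intro s hs
      rw [interior_Ico] at hs
      exact ((hhd s (Set.mem_Ico_of_Ioo hs)).differentiableAt).differentiableWithinAt
    · intro s hs
      rw [interior_Ico] at hs
      obtain ⟨hs1, hs2⟩ := hs
      have hs0 : 0 < s := hc0.trans hs1
      rw [(hhd s ⟨le_of_lt hs1, hs2⟩).deriv]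
      have hsc2 : 0 < s - c^2 := by nlinarith
      have hD : 0 < s * (s - c^2) * (1 - s) := by
        have : 0 < 1 - s := by linarith
        positivity
      have hE : ((μ/(c^2/s) - β/(1-c^2/s)) * (c^2 * (-(s^2)⁻¹)) - (μ/s - β/(1-s)))
          * (s * (s - c^2) * (1 - s)) = (ν + μ) * (s - c)^2 := by
        have h1 : s ≠ 0 := ne_of_gt hs0
        have h2 : (1:ℝ) - s ≠ 0 := by linarith
        have h3 : s - c^2 ≠ 0 := ne_of_gt hsc2
        have h4 : (1:ℝ) - c^2/s ≠ 0 := by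
          rw [sub_ne_zero]
          intro hcon
          apply h3
          field_simp at hcon
          linarith
        have h5 : c^2/s ≠ 0 := by positivity
        have hν' : ν ≠ 0 := ne_of_gt hν
        have h6 : (0:ℝ) < ν^2*s - μ^2 := by
          have e : (s - (μ/ν)^2)*ν^2 = ν^2*s - μ^2 := by field_simp
          nlinarith [mul_pos hsc2 (show (0:ℝ) < ν^2 by positivity)]
        have h7 : -μ^2 + ν^2*s ≠ 0 := by intro hcon; rw [← hcon] at h6; linarith
        rw [hβ, hc] at *
        field_simp
        ring
      nlinarith [hE, hD, sq_nonneg (s - c), mul_pos hD hD]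
  have hhc : h c = 0 := by
    have : c^2/c = c := by field_simp [pow_two]
    simp [hh, this]
  have := hmono (Set.left_mem_Ico.2 hc1) ht (ht.1)
  rw [hhc] at this
  have hfin : 0 ≤ L (c^2/t) - L t := this
  simp only [hL] at hfin
  linarith

open Real in
lemma exp_L (m k : ℕ) (x : ℝ) (hx0 : 0 < x) (hx1 : x < 1) :
    exp ((m:ℝ) * log x + (k:ℝ) * log (1 - x)) = x^m * (1-x)^k := by
  rw [Real.exp_add, Real.exp_nat_mul, Real.exp_nat_mul, Real.exp_log hx0,
    Real.exp_log (by linarith)]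

open Real in
lemma pointwise_pow (N m : ℕ) (hm1 : 1 ≤ m) (hmN : m < N) (t : ℝ)
    (ht : t ∈ Set.Ico ((m:ℝ)/(N:ℝ)) 1) :
    (((m:ℝ)/(N:ℝ))^2/t)^m * (1 - ((m:ℝ)/(N:ℝ))^2/t)^(N-m)
      ≥ t^m * (1-t)^(N-m) := by
  have hμ : (0:ℝ) < m := by exact_mod_cast hm1
  have hμν : (m:ℝ) < (N:ℝ) := by exact_mod_cast hmN
  have hν : (0:ℝ) < N := lt_trans hμ hμν
  set c : ℝ := (m:ℝ)/(N:ℝ) with hc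
  have hc0 : 0 < c := by positivity
  have hc1 : c < 1 := (div_lt_one hν).2 hμν
  obtain ⟨ht1, ht2⟩ := ht
  have ht0 : 0 < t := lt_of_lt_of_le hc0 ht1
  have hu0 : 0 < c^2/t := by positivity
  have hu1 : c^2/t < 1 := by
    calc c^2/t ≤ c^2/c := div_le_div_of_nonneg_left (by positivity) hc0 ht1
      _ = c := by field_simp [pow_two]
      _ < 1 := hc1
  have hkey := key_ineq (m:ℝ) (N:ℝ) hμ hμν t ⟨ht1, ht2⟩
  have hcast : ((N:ℝ) - (m:ℝ)) = ((N - m : ℕ) : ℝ) := by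
    push_cast [Nat.cast_sub (le_of_lt hmN)]
    ring
  rw [hcast] at hkey
  have h1 := exp_L m (N-m) (c^2/t) hu0 hu1
  have h2 := exp_L m (N-m) t ht0 ht2
  rw [← h1, ← h2]
  exact Real.exp_le_exp.2 hkey

lemma F_at_one (N m : ℕ) (hm : m ≤ N) :
    (∑ k ∈ Icc m N, (N.choose k : ℝ) * (1:ℝ)^k * (1-1)^(N-k)) = 1 := by
  rw [Finset.sum_eq_single_of_mem N (by simp [Finset.mem_Icc, hm])]
  · simp
  · intro k hk hkne
    simp only [Finset.mem_Icc] at hk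
    have : N - k ≠ 0 := by omega
    simp [this, zero_pow]

lemma F_nonneg (N m : ℕ) (x : ℝ) (hx0 : 0 ≤ x) (hx1 : x ≤ 1) :
    0 ≤ ∑ k ∈ Icc m N, (N.choose k : ℝ) * x^k * (1-x)^(N-k) := by
  apply Finset.sum_nonneg
  intro k _
  have h1 : (0:ℝ) ≤ 1 - x := by linarith
  positivity

lemma tail_ge_half (N m : ℕ) (hN : 0 < N) (hmN : m ≤ N) :
    (∑ k ∈ Icc m N, (N.choose k : ℝ) * ((m:ℝ)/(N:ℝ))^k * (1-(m:ℝ)/(N:ℝ))^(N-k)) ≥ 1/2 := by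
  rcases Nat.eq_zero_or_pos m with hm0 | hm1
  · subst hm0
    simp only [Nat.cast_zero, zero_div]
    rw [Finset.sum_eq_single_of_mem 0 (by simp [Finset.mem_Icc])]
    · simp; norm_num
    · intro k hk hkne
      simp [zero_pow hkne]
  rcases eq_or_lt_of_le hmN with hmN' | hmN'
  · subst hmN'
    have hN' : (m:ℝ) ≠ 0 := by positivity
    rw [show (m:ℝ)/(m:ℝ) = 1 by field_simp]
    rw [F_at_one m m le_rfl]
    norm_num
  -- main case : 1 ≤ m < N
  have hμ : (0:ℝ) < m := by exact_mod_cast hm1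
  have hμν : (m:ℝ) < (N:ℝ) := by exact_mod_cast hmN'
  have hν : (0:ℝ) < N := lt_trans hμ hμν
  set c : ℝ := (m:ℝ)/(N:ℝ) with hc
  have hc0 : 0 < c := by positivity
  have hc1 : c < 1 := (div_lt_one hν).2 hμν
  set F : ℝ → ℝ := fun y => ∑ k ∈ Icc m N, (N.choose k : ℝ) * y^k * (1-y)^(N-k) with hF
  set w : ℝ → ℝ := fun y => (N:ℝ) * ((N-1).choose (m-1):ℝ) * y^(m-1) * (1-y)^(N-m) with hw
  have hFd : ∀ y : ℝ, HasDerivAt F (w y) y := fun y => hasDerivAt_tail N m hm1 hmN y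
  set G : ℝ → ℝ := fun t => F (c^2/t) + F t with hG
  have hGd : ∀ t : ℝ, t ≠ 0 → HasDerivAt G (w (c^2/t) * (c^2 * (-(t^2)⁻¹)) + w t) t := by
    intro t ht
    have hinner : HasDerivAt (fun t : ℝ => c^2/t) (c^2 * (-(t^2)⁻¹)) t := by
      simpa [div_eq_mul_inv] using (hasDerivAt_inv ht).const_mul (c^2)
    exact ((hFd (c^2/t)).comp t hinner).add (hFd t)
  have hA : AntitoneOn G (Set.Icc c 1) := by
    apply antitoneOn_of_deriv_nonpos (convex_Icc c 1)
    · intro s hs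
      have hs0 : s ≠ 0 := by
        obtain ⟨h1, _⟩ := hs
        exact ne_of_gt (lt_of_lt_of_le hc0 h1)
      exact (hGd s hs0).continuousAt.continuousWithinAt
    · intro s hs
      rw [interior_Icc] at hs
      have hs0 : s ≠ 0 := ne_of_gt (hc0.trans hs.1)
      exact (hGd s hs0).differentiableAt.differentiableWithinAt
    · intro s hs
      rw [interior_Icc] at hs
      obtain ⟨hs1, hs2⟩ := hs
      have hs0 : 0 < s := hc0.trans hs1
      rw [(hGd s (ne_of_gt hs0)).deriv]
      -- need : w(c²/s)*(c²*(-(s²)⁻¹)) + w s ≤ 0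
      set u : ℝ := c^2/s with hu
      have hptw := pointwise_pow N m hm1 hmN' s ⟨le_of_lt hs1, hs2⟩
      have hA0 : (0:ℝ) ≤ (N:ℝ) * ((N-1).choose (m-1):ℝ) := by positivity
      have e0 : s * (c^2 * (s^2)⁻¹) = u := by
        rw [hu]; field_simp
      have epow : ∀ x : ℝ, x^(m-1) * x = x^m := by
        intro x; rw [← pow_succ, Nat.sub_add_cancel hm1]
      have e1 : s * w s = (N:ℝ) * ((N-1).choose (m-1):ℝ) * (s^m * (1-s)^(N-m)) := by
        rw [hw]; simp only []
        rw [← epow s]; ring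
      have e2 : s * (w u * (c^2 * (s^2)⁻¹)) = (N:ℝ) * ((N-1).choose (m-1):ℝ) * (u^m * (1-u)^(N-m)) := by
        have : s * (w u * (c^2 * (s^2)⁻¹)) = w u * (s * (c^2 * (s^2)⁻¹)) := by ring
        rw [this, e0, hw]; simp only []
        rw [← epow u]; ring
      have hmul := mul_le_mul_of_nonneg_left hptw hA0
      have : s * (w (c^2/s) * (c^2 * (s^2)⁻¹)) ≥ s * w s := by
        rw [e2, e1]; exact hmul
      have hfin : w (c^2/s) * (c^2 * (s^2)⁻¹) ≥ w s := le_of_mul_le_mul_left this hs0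
      nlinarith [hfin]
  have hGc : G c = 2 * F c := by
    rw [hG]; simp only []
    rw [show c^2/c = c by field_simp [pow_two]]
    ring
  have hG1 : G 1 = F (c^2) + 1 := by
    rw [hG]; simp only [div_one]
    rw [hF]; simp only []
    rw [F_at_one N m hmN]
  have hle := hA (Set.mem_Icc.2 ⟨le_rfl, le_of_lt hc1⟩) (Set.mem_Icc.2 ⟨le_of_lt hc1, le_rfl⟩) (le_of_lt hc1)
  rw [hGc, hG1] at hle
  have hFc2 : 0 ≤ F (c^2) := F_nonneg N m (c^2) (by positivity) (by nlinarith)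
  linarith


lemma le_eq_ge (N m : ℕ) (hm : m ≤ N) (p : ℝ) :
    binomialP_le N p m = binomialP_ge N (1-p) (N-m) := by
  unfold binomialP_le binomialP_ge
  apply Finset.sum_bij' (i := fun k _ => N - k) (j := fun k _ => N - k)
  · intro a ha
    simp only [Finset.mem_Icc] at *
    omega
  · intro a ha
    simp only [Finset.mem_Icc] at *
    omega
  · intro a ha
    simp only [Finset.mem_Icc] at ha
    omega
  · intro a ha
    simp only [Finset.mem_Icc] at ha
    omega
  · intro a ha
    simp only [Finset.mem_Icc] at ha
    unfold binomialPMF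
    rw [Nat.choose_symm (by omega), show N - (N - a) = a by omega]
    ring_nf

lemma ge_half (N m : ℕ) (hN : 0 < N) (hmN : m ≤ N) :
    binomialP_ge N ((m:ℝ)/(N:ℝ)) m ≥ 1/2 := by
  unfold binomialP_ge binomialPMF
  exact tail_ge_half N m hN hmN

theorem stmt10 (N : ℕ) (hN : 0 < N) (p : ℝ) (hp0 : 0 ≤ p) (hp1 : p ≤ 1)
    (m : ℕ) (hm : (N : ℝ) * p = m) :
    binomialP_ge N p m ≥ 1/2 ∧ binomialP_le N p m ≥ 1/2 := by
  have hν : (0:ℝ) < N := by exact_mod_cast hN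
  have hp : p = (m:ℝ)/(N:ℝ) := by
    field_simp
    linarith [hm]
  have hmN : m ≤ N := by
    have : (m:ℝ) ≤ (N:ℝ) := by
      rw [← hm]
      nlinarith
    exact_mod_cast this
  constructor
  · rw [hp]
    exact ge_half N m hN hmN
  · rw [le_eq_ge N m hmN p]
    have h1p : 1 - p = ((N - m : ℕ):ℝ)/(N:ℝ) := by
      rw [Nat.cast_sub hmN, hp]
      field_simp
    rw [h1p]
    exact ge_half N (N - m) hN (Nat.sub_le N m)
end

section
/- For X ~ Binomial(N, p) with mean m = Np an integer, P(X ≥ m) = 1/2 + (P(X = m) + P(X ≥ m) − P(X ≤ m))/2; in particular P(X ≥ m) − 1/2 ≤ P(X = m). -/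
open Finset

lemma pmf_nonneg {N : ℕ} {p : ℝ} (hp0 : 0 ≤ p) (hp1 : p ≤ 1) (k : ℕ) :
    0 ≤ binomialPMF N p k := by
  have h1 : (0:ℝ) ≤ 1 - p := by linarith
  unfold binomialPMF
  positivity

lemma sum_pmf (N : ℕ) (p : ℝ) : ∑ k ∈ Finset.Icc 0 N, binomialPMF N p k = 1 := by
  have h := add_pow p (1 - p) N
  rw [add_sub_cancel, one_pow] at h
  rw [show Finset.Icc 0 N = Finset.range (N+1) by rw [Finset.range_eq_Ico, Finset.Ico_add_one_right_eq_Icc]]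
  rw [h]
  apply Finset.sum_congr rfl
  intro k _
  unfold binomialPMF
  ring

lemma sum_split {N m : ℕ} (p : ℝ) (hmN : m ≤ N) :
    binomialP_le N p m + ∑ k ∈ Finset.Ioc m N, binomialPMF N p k = 1 := by
  rw [← sum_pmf N p]
  unfold binomialP_le
  rw [← Finset.add_sum_Ioc_eq_sum_Icc (Nat.zero_le N), ← Finset.add_sum_Ioc_eq_sum_Icc (Nat.zero_le m),
    add_assoc, Finset.sum_Ioc_consecutive _ (Nat.zero_le m) hmN]

lemma ge_split {N m : ℕ} (p : ℝ) (hmN : m ≤ N) :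
    binomialP_ge N p m = binomialPMF N p m + ∑ k ∈ Finset.Ioc m N, binomialPMF N p k := by
  unfold binomialP_ge
  rw [← Finset.add_sum_Ioc_eq_sum_Icc hmN]


lemma key_E (a b k m m' : ℕ) (ha : m' = a + (k+1)) (hbm : m = b + k) (hab : a + 1 ≤ b) :
    a * ((m'+k+1) * m^2) ≤ b * ((m+1+k+1) * m'^2) := by
  obtain ⟨c, rfl⟩ : ∃ c, b = a + 1 + c := ⟨b - (a+1), by omega⟩
  subst ha hbm
  have hid : (a + 1 + c) * ((a + 1 + c + k + 1 + k + 1) * (a + (k + 1)) ^ 2)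
      = a * ((a + (k + 1) + k + 1) * (a + 1 + c + k) ^ 2)
        + ((a+k+1)^2*(2*(a+1+c+k)+1) + (k+1)^2*c*(2*a+c+2*k+2)) := by ring
  rw [hid]
  exact Nat.le_add_right _ _


lemma key_nat {N m m' : ℕ} (hN : m + m' = N) (hm' : m' ≤ m) :
    ∀ k, k + 1 ≤ m' → N.choose (m+1+k) * m^(2*k+1) ≤ N.choose (m'+k) * m'^(2*k+1) := by
  intro k
  induction k with
  | zero =>
    intro hk
    have h1 : N.choose (m+1) * (m+1) = N.choose m * m' := by
      have h := Nat.choose_succ_right_eq N m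
      rwa [show N - m = m' by omega] at h
    have h2 : N.choose m' = N.choose m := by
      rw [show m' = N - m by omega]
      exact Nat.choose_symm (by omega)
    calc N.choose (m+1+0) * m^(2*0+1) = N.choose (m+1) * m := by norm_num
      _ ≤ N.choose (m+1) * (m+1) := Nat.mul_le_mul_left _ (Nat.le_succ m)
      _ = N.choose m * m' := h1
      _ = N.choose (m'+0) * m'^(2*0+1) := by simp [h2]
  | succ k ih =>
    intro hk
    have hQ := ih (by omega)
    have hkm : k ≤ m := by omega
    set a := m' - (k+1) with ha'
    have ha : m' = a + (k+1) := by omega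
    set b := m - k with hb'
    have hbm : m = b + k := by omega
    have hab : a + 1 ≤ b := by omega
    have R1 : N.choose (m+1+k+1) * (m+1+k+1) = N.choose (m+1+k) * a := by
      have h := Nat.choose_succ_right_eq N (m+1+k)
      rwa [show N - (m+1+k) = a by omega] at h
    have R2 : N.choose (m'+k+1) * (m'+k+1) = N.choose (m'+k) * b := by
      have h := Nat.choose_succ_right_eq N (m'+k)
      rwa [show N - (m'+k) = b by omega] at h
    have hE := key_E a b k m m' ha hbm hab
    have main : ((m+1+k+1)*(m'+k+1)) * (N.choose (m+1+k+1) * m^(2*(k+1)+1))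
        ≤ ((m+1+k+1)*(m'+k+1)) * (N.choose (m'+k+1) * m'^(2*(k+1)+1)) := by
      calc ((m+1+k+1)*(m'+k+1)) * (N.choose (m+1+k+1) * m^(2*(k+1)+1))
          = (N.choose (m+1+k+1) * (m+1+k+1)) * ((m'+k+1) * m^(2*(k+1)+1)) := by ring
        _ = (N.choose (m+1+k) * a) * ((m'+k+1) * m^(2*(k+1)+1)) := by rw [R1]
        _ = (N.choose (m+1+k) * m^(2*k+1)) * (a * ((m'+k+1) * m^2)) := by ring
        _ ≤ (N.choose (m'+k) * m'^(2*k+1)) * (b * ((m+1+k+1) * m'^2)) :=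
            Nat.mul_le_mul hQ hE
        _ = (N.choose (m'+k) * b) * ((m+1+k+1) * m'^(2*(k+1)+1)) := by ring
        _ = (N.choose (m'+k+1) * (m'+k+1)) * ((m+1+k+1) * m'^(2*(k+1)+1)) := by rw [R2]
        _ = ((m+1+k+1)*(m'+k+1)) * (N.choose (m'+k+1) * m'^(2*(k+1)+1)) := by ring
    have := Nat.le_of_mul_le_mul_left main (by positivity)
    calc N.choose (m+1+(k+1)) * m^(2*(k+1)+1) = N.choose (m+1+k+1) * m^(2*(k+1)+1) := by ring_nf
      _ ≤ N.choose (m'+k+1) * m'^(2*(k+1)+1) := this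
      _ = N.choose (m'+(k+1)) * m'^(2*(k+1)+1) := by ring_nf


lemma h_nonneg {p : ℝ} (hp : 0 < p) (hp2 : p ≤ 1/2) {s : ℝ} (hs0 : 0 ≤ s) (hsp : s < p) :
    (1-p)*(Real.log (1-p+s) - Real.log (1-p-s)) ≤ p*(Real.log (p+s) - Real.log (p-s)) := by
  set q : ℝ := 1 - p with hqdef
  have hq : 0 < q := by simp [hqdef]; linarith
  have hpq : p ≤ q := by simp [hqdef]; linarith
  set h : ℝ → ℝ := fun x => p*(Real.log (p+x) - Real.log (p-x)) - q*(Real.log (q+x) - Real.log (q-x)) with hdef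
  have hderiv : ∀ x ∈ Set.Icc (0:ℝ) s, HasDerivAt h
      (p * (1/(p+x) + 1/(p-x)) - q * (1/(q+x) + 1/(q-x))) x := by
    intro x hx
    obtain ⟨hx0, hxs⟩ := hx
    have h1 : 0 < p + x := by linarith
    have h2 : 0 < p - x := by linarith
    have h3 : 0 < q + x := by linarith
    have h4 : 0 < q - x := by linarith
    have d1 : HasDerivAt (fun x : ℝ => Real.log (p+x)) (1/(p+x)) x := by
      simpa using (((hasDerivAt_id x).const_add p).log h1.ne')
    have d2 : HasDerivAt (fun x : ℝ => Real.log (p-x)) (-(1/(p-x))) x := by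
      have := (((hasDerivAt_id x).const_sub p).log h2.ne')
      simpa [neg_div] using this
    have d3 : HasDerivAt (fun x : ℝ => Real.log (q+x)) (1/(q+x)) x := by
      simpa using (((hasDerivAt_id x).const_add q).log h3.ne')
    have d4 : HasDerivAt (fun x : ℝ => Real.log (q-x)) (-(1/(q-x))) x := by
      have := (((hasDerivAt_id x).const_sub q).log h4.ne')
      simpa [neg_div] using this
    have := ((d1.sub d2).const_mul p).sub ((d3.sub d4).const_mul q)
    exact this.congr_deriv (by ring)
  have hmono : MonotoneOn h (Set.Icc (0:ℝ) s) := by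
    apply monotoneOn_of_deriv_nonneg (convex_Icc 0 s)
    · exact fun x hx => ((hderiv x hx).continuousAt).continuousWithinAt
    · intro x hx
      rw [interior_Icc] at hx
      exact ((hderiv x (Set.mem_Icc_of_Ioo hx)).differentiableAt).differentiableWithinAt
    · intro x hx
      rw [interior_Icc] at hx
      obtain ⟨hx0, hxs⟩ := hx
      rw [(hderiv x ⟨le_of_lt hx0, le_of_lt hxs⟩).deriv]
      have h1 : 0 < p + x := by linarith
      have h2 : 0 < p - x := by linarith
      have h3 : 0 < q + x := by linarith
      have h4 : 0 < q - x := by linarith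
      have e1 : 1/(p+x) + 1/(p-x) = 2*p/((p+x)*(p-x)) := by
        field_simp; ring
      have e2 : 1/(q+x) + 1/(q-x) = 2*q/((q+x)*(q-x)) := by
        field_simp; ring
      rw [e1, e2, sub_nonneg]
      rw [mul_div_assoc', mul_div_assoc', div_le_div_iff₀ (by positivity) (by positivity)]
      nlinarith [sq_nonneg x, mul_nonneg (mul_nonneg (sub_nonneg.2 hpq) (by linarith : (0:ℝ) ≤ q + p)) (sq_nonneg x)]
  have h0 : h 0 = 0 := by simp [hdef]
  have hs : h 0 ≤ h s := hmono (Set.left_mem_Icc.2 hs0) (Set.right_mem_Icc.2 hs0) hs0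
  rw [h0] at hs
  simp only [hdef] at hs
  linarith

lemma pow_key {N m n : ℕ} {p s : ℝ} (hp : 0 < p) (hp2 : p ≤ 1/2) (hs0 : 0 ≤ s) (hsp : s ≤ p)
    (hm : (N:ℝ)*p = m) (hn : (n:ℝ) ≤ (N:ℝ)*(1-p)) (hm1 : 1 ≤ m) :
    (p-s)^m * (1-p+s)^n ≤ (p+s)^m * (1-p-s)^n := by
  rcases eq_or_lt_of_le hsp with heq | hlt
  · rw [heq]
    have h0 : (p - p:ℝ)^m = 0 := by
      rw [sub_self]
      exact zero_pow (by omega)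
    rw [h0, zero_mul]
    have h4 : (0:ℝ) ≤ 1 - p - p := by linarith
    apply mul_nonneg (by positivity)
    exact pow_nonneg h4 n
  · have h1 : 0 < p + s := by linarith
    have h2 : 0 < p - s := by linarith
    have h3 : 0 < 1 - p + s := by linarith
    have h4 : 0 < 1 - p - s := by linarith
    have hL1 : 0 ≤ Real.log (1-p+s) - Real.log (1-p-s) := by
      have := Real.log_le_log h4 (by linarith : 1-p-s ≤ 1-p+s)
      linarith
    have hkey := h_nonneg hp hp2 hs0 hlt
    have hNn : (n:ℝ) * (Real.log (1-p+s) - Real.log (1-p-s))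
        ≤ (m:ℝ) * (Real.log (p+s) - Real.log (p-s)) := by
      calc (n:ℝ) * (Real.log (1-p+s) - Real.log (1-p-s))
          ≤ ((N:ℝ)*(1-p)) * (Real.log (1-p+s) - Real.log (1-p-s)) :=
            mul_le_mul_of_nonneg_right hn hL1
        _ ≤ ((N:ℝ)*p) * (Real.log (p+s) - Real.log (p-s)) := by
            have hN0 : (0:ℝ) ≤ N := Nat.cast_nonneg N
            rw [mul_assoc, mul_assoc]
            exact mul_le_mul_of_nonneg_left hkey hN0
        _ = (m:ℝ) * (Real.log (p+s) - Real.log (p-s)) := by rw [hm]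
    -- exponentiate
    have expand : (m:ℝ) * Real.log (p-s) + (n:ℝ) * Real.log (1-p+s)
        ≤ (m:ℝ) * Real.log (p+s) + (n:ℝ) * Real.log (1-p-s) := by nlinarith
    have e : ∀ (x : ℝ) (k : ℕ), 0 < x → x ^ k = Real.exp ((k:ℝ) * Real.log x) := by
      intro x k hx
      rw [← Real.log_pow, Real.exp_log (by positivity)]
    rw [e _ m h2, e _ n h3, e _ m h1, e _ n h4, ← Real.exp_add, ← Real.exp_add]
    exact Real.exp_le_exp.2 expand

lemma median_small {N m : ℕ} {p : ℝ} (hp0 : 0 ≤ p) (hp1 : p ≤ 1) (hm : (N:ℝ) * p = m)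
    (hmN : m ≤ N) (hp : p ≤ 1/2) : 1/2 ≤ binomialP_le N p m := by
  rcases Nat.eq_zero_or_pos m with hm0 | hm1
  · subst hm0
    rcases Nat.eq_zero_or_pos N with hN0 | hN
    · subst hN0
      simp [binomialP_le, binomialPMF]
      norm_num
    · have hp' : p = 0 := by
        have hN' : (0:ℝ) < N := by exact_mod_cast hN
        have : (N:ℝ) * p = 0 := by rw [hm]; norm_num
        rcases mul_eq_zero.mp this with h | h
        · linarith
        · exact h
      subst hp'
      have : binomialP_le N 0 0 = 1 := by
        simp [binomialP_le, binomialPMF]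
      rw [this]; norm_num
  -- main case : 1 ≤ m
  have hmR : (1:ℝ) ≤ m := by exact_mod_cast hm1
  have hNpos : 0 < N := lt_of_lt_of_le hm1 hmN
  have hNR : (0:ℝ) < N := by exact_mod_cast hNpos
  have hppos : 0 < p := by nlinarith
  have hmltN : m + 1 ≤ N := by
    rcases lt_or_eq_of_le hmN with h | h
    · omega
    · exfalso
      subst h
      nlinarith
  set n := N - (m+1) with hndef
  set c : ℝ := (((N - m) * N.choose m : ℕ):ℝ) with hcdef
  set f : ℝ → ℝ := fun x => x^m * (1-x)^n with hfdef
  set F : ℝ → ℝ := fun x => ∑ k ∈ Finset.Icc (m+1) N, (N.choose k:ℝ) * x^k * (1-x)^(N-k)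
    with hFdef
  have hfc : Continuous f := by
    apply Continuous.mul (continuous_pow m)
    exact (continuous_const.sub continuous_id).pow n
  set G : ℕ → ℝ → ℝ := fun j x => ((j * N.choose j : ℕ):ℝ) * x^(j-1) * (1-x)^(N-j) with hGdef
  -- derivative of each term
  have hterm : ∀ (k : ℕ) (x : ℝ), k ∈ Finset.Icc (m+1) N →
      HasDerivAt (fun y : ℝ => (N.choose k:ℝ) * y^k * (1-y)^(N-k)) (G k x - G (k+1) x) x := by
    intro k x hk
    obtain ⟨hk1, hk2⟩ := Finset.mem_Icc.mp hk
    have h1 : HasDerivAt (fun y : ℝ => y^k) ((k:ℝ) * x^(k-1)) x := hasDerivAt_pow k x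
    have h2 : HasDerivAt (fun y : ℝ => (1-y)^(N-k)) (-(((N-k:ℕ):ℝ) * (1-x)^(N-k-1))) x := by
      have h3 := hasDerivAt_pow (N-k) (1-x)
      have h4 : HasDerivAt (fun y : ℝ => 1 - y) (-1) x := (hasDerivAt_id x).const_sub 1
      have := h3.comp x h4
      exact this.congr_deriv (by ring)
    have h5 := (h1.const_mul ((N.choose k:ℝ))).mul h2
    refine h5.congr_deriv ?_
    have e1 : G k x = (N.choose k:ℝ) * ((k:ℝ) * x^(k-1)) * (1-x)^(N-k) := by
      simp only [hGdef]
      push_cast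
      ring
    have e2 : G (k+1) x = (N.choose k:ℝ) * x^k * (((N-k:ℕ):ℝ) * (1-x)^(N-k-1)) := by
      simp only [hGdef]
      have hcc : (k+1) * N.choose (k+1) = N.choose k * (N - k) := by
        rw [mul_comm]
        exact Nat.choose_succ_right_eq N k
      rw [hcc]
      have e3 : (k+1) - 1 = k := by omega
      have e4 : N - (k+1) = N - k - 1 := by omega
      rw [e3, e4]
      push_cast
      ring
    rw [e1, e2]
    ring
  -- derivative of F
  have hF : ∀ x : ℝ, HasDerivAt F (c * f x) x := by
    intro x
    have hsum : HasDerivAt F (∑ k ∈ Finset.Icc (m+1) N, (G k x - G (k+1) x)) x := by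
      apply HasDerivAt.fun_sum
      intro k hk
      exact hterm k x hk
    have htel : ∑ k ∈ Finset.Icc (m+1) N, (G k x - G (k+1) x) = G (m+1) x := by
      rw [show Finset.Icc (m+1) N = Finset.Ico (m+1) (N+1) by
        rw [Finset.Ico_add_one_right_eq_Icc]]
      rw [Finset.sum_Ico_eq_sum_range]
      have hsz : N + 1 - (m+1) = N - m := by omega
      rw [hsz]
      have hcongr : ∀ i ∈ Finset.range (N-m), (fun j => G j x - G (j+1) x) (m+1+i)
          = (fun i => G (m+1+i) x) i - (fun i => G (m+1+i) x) (i+1) := by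
        intro i _
        have e : m+1+(i+1) = m+1+i+1 := by omega
        simp [e]
      rw [Finset.sum_congr rfl hcongr, Finset.sum_range_sub']
      have hz : G (m+1+(N-m)) x = 0 := by
        have : m+1+(N-m) = N+1 := by omega
        rw [this]
        simp only [hGdef]
        rw [Nat.choose_eq_zero_of_lt (by omega)]
        simp
      rw [hz, sub_zero]
    rw [htel] at hsum
    have hGc : G (m+1) x = c * f x := by
      simp only [hGdef, hcdef, hfdef]
      have hcc : (m+1) * N.choose (m+1) = (N - m) * N.choose m := by
        rw [mul_comm (m+1), Nat.choose_succ_right_eq N m, mul_comm]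
      rw [hcc]
      have e3 : (m+1) - 1 = m := by omega
      rw [e3, hndef]
      push_cast
      ring
    rwa [hGc] at hsum
  -- FTC
  have hintc : ∀ a b : ℝ, IntervalIntegrable (fun x => c * f x) MeasureTheory.volume a b :=
    fun a b => (continuous_const.mul hfc).intervalIntegrable a b
  have hint : ∀ a b : ℝ, IntervalIntegrable f MeasureTheory.volume a b :=
    fun a b => hfc.intervalIntegrable a b
  have A1 : ∫ x in (0:ℝ)..p, c * f x = F p - F 0 :=
    intervalIntegral.integral_eq_sub_of_hasDerivAt (fun x _ => hF x) (hintc 0 p)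
  have A2 : ∫ x in p..(1:ℝ), c * f x = F 1 - F p :=
    intervalIntegral.integral_eq_sub_of_hasDerivAt (fun x _ => hF x) (hintc p 1)
  have hF0 : F 0 = 0 := by
    simp only [hFdef]
    apply Finset.sum_eq_zero
    intro k hk
    obtain ⟨hk1, _⟩ := Finset.mem_Icc.mp hk
    rw [zero_pow (by omega : k ≠ 0)]
    ring
  have hF1 : F 1 = 1 := by
    simp only [hFdef]
    rw [Finset.sum_eq_single N]
    · simp
    · intro k hk hkN
      obtain ⟨_, hk2⟩ := Finset.mem_Icc.mp hk
      rw [show (1:ℝ) - 1 = 0 by ring, zero_pow (by omega : N - k ≠ 0)]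
      ring
    · intro hN
      exfalso
      exact hN (Finset.mem_Icc.mpr ⟨hmltN, le_refl N⟩)
  -- integral comparison
  have hc0 : 0 ≤ c := by positivity
  have hB : ∫ x in (0:ℝ)..p, f x ≤ ∫ x in p..(2*p), f x := by
    have hcomp : ∫ x in p..(2*p), f (2*p - x) = ∫ x in (0:ℝ)..p, f x := by
      rw [intervalIntegral.integral_comp_sub_left f (2*p)]
      have h2p : 2*p - p = p := by ring
      have h2p' : 2*p - 2*p = 0 := by ring
      rw [h2p, h2p']
    rw [← hcomp]
    apply intervalIntegral.integral_mono_on (by linarith)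
      ((hfc.comp (continuous_const.sub continuous_id)).intervalIntegrable p (2*p)) (hint p (2*p))
    intro x hx
    obtain ⟨hx1, hx2⟩ := hx
    have key := pow_key (N := N) (m := m) (n := n) (s := x - p) hppos hp
      (by linarith) (by linarith) hm ?hn hm1
    case hn =>
      have : ((n:ℕ):ℝ) ≤ (N:ℝ) - m := by
        rw [hndef]
        push_cast [hmltN]
        linarith
      rw [← hm] at this
      calc ((n:ℕ):ℝ) ≤ (N:ℝ) - (N:ℝ)*p := this
        _ = (N:ℝ)*(1-p) := by ring
    simp only [hfdef, Function.comp_apply, id_eq, Pi.sub_apply]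
    have e1 : 2*p - x = p - (x - p) := by ring
    have e2 : 1 - (p - (x - p)) = 1 - p + (x - p) := by ring
    have e3 : (x:ℝ) = p + (x - p) := by ring
    have e4 : 1 - x = 1 - p - (x - p) := by ring
    rw [e1, e2]
    calc (p - (x-p))^m * (1 - p + (x-p))^n ≤ (p + (x-p))^m * (1 - p - (x-p))^n := key
      _ = x^m * (1-x)^n := by rw [← e3, ← e4]
  have hC : ∫ x in p..(2*p), f x ≤ ∫ x in p..(1:ℝ), f x := by
    have hsplit : ∫ x in p..(1:ℝ), f x
        = (∫ x in p..(2*p), f x) + ∫ x in (2*p)..(1:ℝ), f x := by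
      rw [intervalIntegral.integral_add_adjacent_intervals (hint p (2*p)) (hint (2*p) 1)]
    have hnn : 0 ≤ ∫ x in (2*p)..(1:ℝ), f x := by
      apply intervalIntegral.integral_nonneg (by linarith)
      intro x hx
      obtain ⟨hx1, hx2⟩ := hx
      simp only [hfdef]
      have : (0:ℝ) ≤ x := by linarith
      have : (0:ℝ) ≤ 1 - x := by linarith
      positivity
    linarith
  -- combine
  have hFp : F p ≤ 1/2 := by
    have l1 : ∫ x in (0:ℝ)..p, c * f x = c * ∫ x in (0:ℝ)..p, f x :=
      intervalIntegral.integral_const_mul c f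
    have l2 : ∫ x in p..(1:ℝ), c * f x = c * ∫ x in p..(1:ℝ), f x :=
      intervalIntegral.integral_const_mul c f
    have : F p - F 0 ≤ F 1 - F p := by
      rw [← A1, ← A2, l1, l2]
      apply mul_le_mul_of_nonneg_left _ hc0
      linarith
    rw [hF0, hF1] at this
    linarith
  have htail : ∑ k ∈ Finset.Ioc m N, binomialPMF N p k = F p := by
    rw [← Finset.Icc_add_one_left_eq_Ioc]
    simp only [hFdef, binomialPMF]
  have hsp := sum_split (m := m) p hmN
  rw [htail] at hsp
  linarith

lemma median_big {N m : ℕ} {p : ℝ} (hp0 : 0 ≤ p) (hp1 : p ≤ 1) (hm : (N:ℝ) * p = m)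
    (hmN : m ≤ N) (hp : 1/2 ≤ p) : 1/2 ≤ binomialP_le N p m := by
  rcases Nat.eq_zero_or_pos N with hN0 | hN
  · subst hN0
    have hm0 : m = 0 := by omega
    subst hm0
    simp [binomialP_le, binomialPMF]
    norm_num
  set m' := N - m with hm'def
  have hNm : m + m' = N := by omega
  have hq : (N:ℝ) * (1 - p) = m' := by
    have : ((m':ℕ):ℝ) = (N:ℝ) - m := by
      rw [hm'def]; push_cast [hmN]; ring
    rw [this, ← hm]; ring
  have hm'm : m' ≤ m := by
    have h1 : ((m':ℕ):ℝ) ≤ (m:ℝ) := by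
      rw [← hq, ← hm]
      have : (0:ℝ) ≤ N := Nat.cast_nonneg N
      nlinarith
    exact_mod_cast h1
  -- termwise inequality
  have hterm : ∀ k, k + 1 ≤ m' → binomialPMF N p (m+1+k) ≤ binomialPMF N p (m-k) := by
    intro k hk
    have hkm : k + 1 ≤ m := le_trans hk hm'm
    have hA : (N.choose (m+1+k) : ℝ) * p^(2*k+1) ≤ (N.choose (m-k) : ℝ) * (1-p)^(2*k+1) := by
      have hnat := key_nat hNm hm'm k hk
      have hsymm : N.choose (m'+k) = N.choose (m-k) := by
        rw [show m' + k = N - (m-k) by omega]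
        exact Nat.choose_symm (by omega)
      rw [hsymm] at hnat
      have hcast : (N.choose (m+1+k) : ℝ) * ((N:ℝ)*p)^(2*k+1)
          ≤ (N.choose (m-k) : ℝ) * ((N:ℝ)*(1-p))^(2*k+1) := by
        rw [hm, hq]
        exact_mod_cast hnat
      have hNpos : (0:ℝ) < (N:ℝ)^(2*k+1) := by positivity
      rw [mul_pow, mul_pow] at hcast
      refine le_of_mul_le_mul_left ?_ hNpos
      calc (N:ℝ)^(2*k+1) * ((N.choose (m+1+k) : ℝ) * p^(2*k+1))
          = (N.choose (m+1+k) : ℝ) * ((N:ℝ)^(2*k+1) * p^(2*k+1)) := by ring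
        _ ≤ (N.choose (m-k) : ℝ) * ((N:ℝ)^(2*k+1) * (1-p)^(2*k+1)) := hcast
        _ = (N:ℝ)^(2*k+1) * ((N.choose (m-k) : ℝ) * (1-p)^(2*k+1)) := by ring
    unfold binomialPMF
    have e1 : N - (m+1+k) = m' - 1 - k := by omega
    have e2 : N - (m-k) = m' + k := by omega
    rw [e1, e2]
    have f1 : p^(m+1+k) = p^(m-k) * p^(2*k+1) := by
      rw [← pow_add]; congr 1; omega
    have f2 : (1-p)^(m'+k) = (1-p)^(m'-1-k) * (1-p)^(2*k+1) := by
      rw [← pow_add]; congr 1; omega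
    have hq0 : (0:ℝ) ≤ 1 - p := by linarith
    calc (N.choose (m+1+k) : ℝ) * p^(m+1+k) * (1-p)^(m'-1-k)
        = ((N.choose (m+1+k) : ℝ) * p^(2*k+1)) * (p^(m-k) * (1-p)^(m'-1-k)) := by
          rw [f1]; ring
      _ ≤ ((N.choose (m-k) : ℝ) * (1-p)^(2*k+1)) * (p^(m-k) * (1-p)^(m'-1-k)) := by
          apply mul_le_mul_of_nonneg_right hA; positivity
      _ = (N.choose (m-k) : ℝ) * p^(m-k) * (1-p)^(m'+k) := by
          rw [f2]; ring
  -- tail bound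
  have htail : ∑ k ∈ Finset.Ioc m N, binomialPMF N p k ≤ binomialP_le N p m := by
    have hrw : Finset.Ioc m N = Finset.Ico (m+1) (N+1) := by
      rw [Finset.Ico_add_one_right_eq_Icc, Finset.Icc_add_one_left_eq_Ioc]
    rw [hrw, Finset.sum_Ico_eq_sum_range]
    have hNm1 : N + 1 - (m+1) = m' := by omega
    rw [hNm1]
    calc ∑ i ∈ Finset.range m', binomialPMF N p (m+1+i)
        ≤ ∑ i ∈ Finset.range m', binomialPMF N p (m-i) := by
          apply Finset.sum_le_sum
          intro i hi
          exact hterm i (Finset.mem_range.mp hi)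
      _ = ∑ j ∈ (Finset.range m').image (fun i => m - i), binomialPMF N p j := by
          rw [Finset.sum_image]
          intro x hx y hy hxy
          have hx' := Finset.mem_range.mp hx
          have hy' := Finset.mem_range.mp hy
          simp only at hxy
          omega
      _ ≤ binomialP_le N p m := by
          unfold binomialP_le
          apply Finset.sum_le_sum_of_subset_of_nonneg
          · intro j hj
            simp only [Finset.mem_image, Finset.mem_range] at hj
            obtain ⟨i, hi, rfl⟩ := hj
            simp [Finset.mem_Icc]
          · intro i _ _
            exact pmf_nonneg hp0 hp1 i
  have hsplit := sum_split (m := m) p hmN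
  linarith


theorem stmt11 (N : ℕ) (p : ℝ) (hp0 : 0 ≤ p) (hp1 : p ≤ 1)
    (m : ℕ) (hm : (N : ℝ) * p = m) :
    binomialP_ge N p m
      = 1/2 + (binomialPMF N p m + binomialP_ge N p m - binomialP_le N p m) / 2 ∧
    binomialP_ge N p m - 1/2 ≤ binomialPMF N p m := by
  have hmN : m ≤ N := by
    have h : (m:ℝ) ≤ N := by
      rw [← hm]
      nlinarith [(Nat.cast_nonneg N : (0:ℝ) ≤ N)]
    exact_mod_cast h
  have hI : binomialP_ge N p m + binomialP_le N p m = 1 + binomialPMF N p m := by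
    rw [ge_split p hmN]
    have := sum_split (m := m) p hmN
    linarith
  have hM : 1/2 ≤ binomialP_le N p m := by
    rcases le_total p (1/2) with h | h
    · exact median_small hp0 hp1 hm hmN h
    · exact median_big hp0 hp1 hm hmN h
  constructor
  · linarith
  · linarith
end

section
/- For X ~ Binomial(6k, 1/6) with k a positive integer, P(X = k) is strictly decreasing in k; in particular P(X = 1 | N = 6) > P(X = 2 | N = 12) > P(X = 3 | N = 18). -/
open Finset

open Nat in
private lemma core13 (k : ℕ) :
    3125 * ((6*k+1)*(6*k+2)*(6*k+3)*(6*k+4)*(6*k+5)*(6*k+6)) <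
    46656 * ((k+1)*((5*k+1)*(5*k+2)*(5*k+3)*(5*k+4)*(5*k+5))) := by
  have h : 46656 * ((k+1)*((5*k+1)*(5*k+2)*(5*k+3)*(5*k+4)*(5*k+5)))
      = 3125 * ((6*k+1)*(6*k+2)*(6*k+3)*(6*k+4)*(6*k+5)*(6*k+6))
        + (3348720 + 36442440*k + 143658720*k^2 + 262035000*k^3
          + 224370000*k^4 + 72900000*k^5) := by ring
  rw [h]
  have : 0 < 3348720 + 36442440*k + 143658720*k^2 + 262035000*k^3
          + 224370000*k^4 + 72900000*k^5 := by positivity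
  omega

open Nat in
private lemma fact6' (k : ℕ) :
    (6*k+6)! = (6*k)! * ((6*k+1)*(6*k+2)*(6*k+3)*(6*k+4)*(6*k+5)*(6*k+6)) := by
  rw [show 6*k+6 = (6*k+5)+1 from rfl, Nat.factorial_succ,
      show 6*k+5 = (6*k+4)+1 from rfl, Nat.factorial_succ,
      show 6*k+4 = (6*k+3)+1 from rfl, Nat.factorial_succ,
      show 6*k+3 = (6*k+2)+1 from rfl, Nat.factorial_succ,
      show 6*k+2 = (6*k+1)+1 from rfl, Nat.factorial_succ,
      show 6*k+1 = (6*k)+1 from rfl, Nat.factorial_succ]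
  ring

open Nat in
private lemma fact5' (k : ℕ) :
    (5*k+5)! = (5*k)! * ((5*k+1)*(5*k+2)*(5*k+3)*(5*k+4)*(5*k+5)) := by
  rw [show 5*k+5 = (5*k+4)+1 from rfl, Nat.factorial_succ,
      show 5*k+4 = (5*k+3)+1 from rfl, Nat.factorial_succ,
      show 5*k+3 = (5*k+2)+1 from rfl, Nat.factorial_succ,
      show 5*k+2 = (5*k+1)+1 from rfl, Nat.factorial_succ,
      show 5*k+1 = (5*k)+1 from rfl, Nat.factorial_succ]
  ring

open Nat in
private lemma choose_core13 (k : ℕ) :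
    (6*(k+1)).choose (k+1) * 3125 < (6*k).choose k * 46656 := by
  have h2 := Nat.choose_mul_factorial_mul_factorial (show k ≤ 6*k by omega)
  have h3 := Nat.choose_mul_factorial_mul_factorial (show k+1 ≤ 6*(k+1) by omega)
  rw [show 6*k - k = 5*k from by omega] at h2
  rw [show 6*(k+1) - (k+1) = 5*k+5 from by omega] at h3
  set C' := (6*(k+1)).choose (k+1)
  set C := (6*k).choose k
  refine lt_of_mul_lt_mul_right ?_ (Nat.zero_le ((k+1)! * (5*k+5)!))
  calc C' * 3125 * ((k+1)! * (5*k+5)!)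
      = 3125 * (C' * (k+1)! * (5*k+5)!) := by ring
    _ = 3125 * (6*(k+1))! := by rw [h3]
    _ = (6*k)! * (3125 * ((6*k+1)*(6*k+2)*(6*k+3)*(6*k+4)*(6*k+5)*(6*k+6))) := by
        rw [show 6*(k+1) = 6*k+6 from by ring, fact6']; ring
    _ < (6*k)! * (46656 * ((k+1)*((5*k+1)*(5*k+2)*(5*k+3)*(5*k+4)*(5*k+5)))) :=
        mul_lt_mul_of_pos_left (core13 k) (Nat.factorial_pos _)
    _ = 46656 * (k+1) * ((5*k+1)*(5*k+2)*(5*k+3)*(5*k+4)*(5*k+5)) * (C * k ! * (5*k)!) := by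
        rw [h2]; ring
    _ = C * 46656 * ((k+1)! * (5*k+5)!) := by
        rw [fact5', Nat.factorial_succ]; ring

private lemma pmf_eq13 (N m : ℕ) (C : ℝ) : C * (1/6)^m * (1 - 1/6)^N = C * 5^N / 6^(m+N) := by
  rw [show (1:ℝ) - 1/6 = 5/6 by norm_num, div_pow, div_pow, pow_add]
  field_simp
  simp

theorem stmt13 :
    (∀ k : ℕ, 1 ≤ k → binomialPMF (6 * (k + 1)) (1/6) (k + 1) < binomialPMF (6 * k) (1/6) k) ∧
    binomialPMF 6 (1/6) 1 > binomialPMF 12 (1/6) 2 ∧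
    binomialPMF 12 (1/6) 2 > binomialPMF 18 (1/6) 3 := by
  have main : ∀ k : ℕ, 1 ≤ k →
      binomialPMF (6 * (k + 1)) (1/6) (k + 1) < binomialPMF (6 * k) (1/6) k := by
    intro k _
    unfold binomialPMF
    rw [show (6*(k+1)) - (k+1) = 5*k+5 from by omega, show 6*k - k = 5*k from by omega,
        pmf_eq13, pmf_eq13, show (k+1)+(5*k+5) = 6*k+6 from by omega,
        show k+(5*k) = 6*k from by omega]
    rw [div_lt_div_iff₀ (by positivity) (by positivity)]
    have key : ((6*(k+1)).choose (k+1) * 5^(5*k+5) * 6^(6*k) : ℕ)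
        < (6*k).choose k * 5^(5*k) * 6^(6*k+6) := by
      have h := choose_core13 k
      calc (6*(k+1)).choose (k+1) * 5^(5*k+5) * 6^(6*k)
          = ((6*(k+1)).choose (k+1) * 3125) * (5^(5*k) * 6^(6*k)) := by ring
        _ < ((6*k).choose k * 46656) * (5^(5*k) * 6^(6*k)) := by
            exact Nat.mul_lt_mul_of_lt_of_le h (le_refl _) (by positivity)
        _ = (6*k).choose k * 5^(5*k) * 6^(6*k+6) := by ring
    exact_mod_cast key
  refine ⟨main, ?_, ?_⟩
  · have h := main 1 le_rfl
    norm_num at h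
    exact h
  · have h := main 2 (by norm_num)
    norm_num at h
    exact h
end

section
/- For every integer N ≥ 1 and p ∈ (0,1) with Np an integer m, P(X ≥ m) > 1/2, where X ~ Binomial(N, p). -/
open Finset

open Set intervalIntegral MeasureTheory in
lemma lkey (m b : ℕ) (hm : 1 ≤ m) (hb : 1 ≤ b) {x : ℝ}
    (hx : (m:ℝ)/((m:ℝ)+b) ≤ x) (hx1 : x < 1) :
    x^(2*m+b) * (1-x)^b ≤ ((m:ℝ)/((m:ℝ)+b))^(2*m) * (x - ((m:ℝ)/((m:ℝ)+b))^2)^b := by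
  have hm0 : (0:ℝ) < m := by exact_mod_cast hm
  have hb0 : (0:ℝ) < b := by exact_mod_cast hb
  set t : ℝ := (m:ℝ)/((m:ℝ)+b) with htdef
  have hden : (0:ℝ) < (m:ℝ)+b := by linarith
  have ht0 : 0 < t := div_pos hm0 hden
  have ht1 : t < 1 := by rw [htdef, div_lt_one hden]; linarith
  have htm : ((m:ℝ)+b) * t = m := by rw [htdef, mul_div_assoc']; exact mul_div_cancel_left₀ _ (ne_of_gt hden)
  clear_value t
  clear htdef
  have htt : t^2 < t := by nlinarith
  have hx0 : 0 < x := lt_of_lt_of_le ht0 hx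
  have hxt2 : t^2 < x := lt_of_lt_of_le htt hx
  set D : ℝ → ℝ := fun y => 2*(m:ℝ)*Real.log t + (b:ℝ)*Real.log (y - t^2)
      - (2*(m:ℝ)+b)*Real.log y - (b:ℝ)*Real.log (1-y) with hDdef
  have hD : ∀ y ∈ Set.Ico t 1, HasDerivAt D
      ((b:ℝ)*(y - t^2)⁻¹ - (2*(m:ℝ)+b)*y⁻¹ + (b:ℝ)*(1-y)⁻¹) y := by
    intro y hy
    have hy0 : 0 < y := lt_of_lt_of_le ht0 hy.1
    have hy1 : y < 1 := hy.2
    have hyt2 : t^2 < y := lt_of_lt_of_le htt hy.1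
    have h1 : HasDerivAt (fun y : ℝ => Real.log (y - t^2)) ((y - t^2)⁻¹) y := by
      have := (Real.hasDerivAt_log (by linarith : y - t^2 ≠ 0)).comp y
        ((hasDerivAt_id y).sub_const (t^2))
      simpa [Function.comp_def] using this
    have h2 : HasDerivAt (fun y : ℝ => Real.log y) (y⁻¹) y :=
      Real.hasDerivAt_log (ne_of_gt hy0)
    have h3 : HasDerivAt (fun y : ℝ => Real.log (1-y)) (-(1-y)⁻¹) y := by
      have := (Real.hasDerivAt_log (by linarith : 1 - y ≠ 0)).comp y
        ((hasDerivAt_const y (1:ℝ)).sub (hasDerivAt_id y))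
      simpa [Function.comp_def] using this
    have := (((h1.const_mul (b:ℝ)).const_add (2*(m:ℝ)*Real.log t)).sub
        (h2.const_mul (2*(m:ℝ)+b))).sub (h3.const_mul (b:ℝ))
    convert this using 1
    · rfl
    · rfl
    · rfl
    ring
  have hDcont : ContinuousOn D (Set.Ico t 1) := fun y hy =>
    ((hD y hy).continuousAt).continuousWithinAt
  have hmono : MonotoneOn D (Set.Ico t 1) := by
    apply monotoneOn_of_deriv_nonneg (convex_Ico t 1) hDcont
    · intro y hy
      rw [interior_Ico] at hy
      exact ((hD y (Set.Ioo_subset_Ico_self hy)).differentiableAt).differentiableWithinAt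
    · intro y hy
      rw [interior_Ico] at hy
      rw [(hD y (Set.Ioo_subset_Ico_self hy)).deriv]
      have hy0 : 0 < y := lt_trans ht0 hy.1
      have hy1 : y < 1 := hy.2
      have hyt2 : t^2 < y := lt_trans htt hy.1
      have e : (b:ℝ)*(y - t^2)⁻¹ - (2*(m:ℝ)+b)*y⁻¹ + (b:ℝ)*(1-y)⁻¹
          = ((b:ℝ)*(y*(1-y)) - (2*(m:ℝ)+b)*((1-y)*(y-t^2)) + (b:ℝ)*(y*(y-t^2)))
            / (y*(1-y)*(y-t^2)) := by
        have hne1 : y - t^2 ≠ 0 := by linarith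
        have hne2 : (1:ℝ) - y ≠ 0 := by linarith
        have hne3 : y ≠ 0 := ne_of_gt hy0
        rw [eq_div_iff (ne_of_gt (mul_pos (mul_pos hy0 (by linarith : (0:ℝ) < 1-y))
          (by linarith : (0:ℝ) < y - t^2)))]
        field_simp
      have num_eq : (b:ℝ)*(y*(1-y)) - (2*(m:ℝ)+b)*((1-y)*(y-t^2)) + (b:ℝ)*(y*(y-t^2))
          = (2*(m:ℝ)+b)*(y-t)^2 := by linear_combination (2*y*(1-t))*htm
      rw [e, num_eq]
      apply div_nonneg (by positivity)
      exact le_of_lt (mul_pos (mul_pos hy0 (by linarith)) (by linarith))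
  have hDt : D t = 0 := by
    have h : t - t^2 = t*(1-t) := by ring
    rw [hDdef]; simp only
    rw [h, Real.log_mul (ne_of_gt ht0) (by linarith)]
    ring
  have hDx : 0 ≤ D x := by
    rw [← hDt]
    exact hmono (Set.mem_Ico.2 ⟨le_refl t, ht1⟩) (Set.mem_Ico.2 ⟨hx, hx1⟩) hx
  have lhs_pos : 0 < x^(2*m+b) * (1-x)^b :=
    mul_pos (pow_pos hx0 _) (pow_pos (by linarith) _)
  have rhs_pos : 0 < t^(2*m) * (x - t^2)^b :=
    mul_pos (pow_pos ht0 _) (pow_pos (by linarith) _)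
  rw [← Real.log_le_log_iff lhs_pos rhs_pos]
  rw [Real.log_mul (ne_of_gt (pow_pos hx0 _)) (ne_of_gt (pow_pos (by linarith : (0:ℝ) < 1-x) _)),
    Real.log_mul (ne_of_gt (pow_pos ht0 _)) (ne_of_gt (pow_pos (by linarith : (0:ℝ) < x - t^2) _))]
  simp only [Real.log_pow]
  rw [hDdef] at hDx; simp only at hDx
  push_cast
  linarith

lemma chooseA (N k : ℕ) (hk : 1 ≤ k) (hkN : k ≤ N) :
    k * N.choose k = N * (N-1).choose (k-1) := by
  have h := Nat.add_one_mul_choose_eq (N-1) (k-1)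
  have hN : N-1+1 = N := by omega
  have hk2 : k-1+1 = k := by omega
  rw [hN, hk2] at h
  rw [h]; ring

lemma chooseB (N k : ℕ) (hkN : k ≤ N) :
    (N - k) * N.choose k = N * (N-1).choose k := by
  rcases eq_or_lt_of_le hkN with rfl | hlt
  · cases k with
    | zero => simp
    | succ n => simp [Nat.choose_eq_zero_of_lt (Nat.lt_succ_self n)]
  · have h1 := Nat.choose_succ_right_eq N k
    have h2 := chooseA N (k+1) (by omega) (by omega)
    simp only [Nat.add_sub_cancel] at h2
    calc (N-k) * N.choose k = N.choose k * (N-k) := Nat.mul_comm _ _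
      _ = N.choose (k+1) * (k+1) := h1.symm
      _ = (k+1) * N.choose (k+1) := Nat.mul_comm _ _
      _ = N * (N-1).choose k := h2

lemma hasDerivAt_sumF (N m : ℕ) (hm : 1 ≤ m) (hmN : m ≤ N) (x : ℝ) :
    HasDerivAt (fun y : ℝ => ∑ k ∈ Finset.Icc m N, (N.choose k : ℝ) * y^k * (1-y)^(N-k))
      ((N:ℝ) * ((N-1).choose (m-1)) * (x^(m-1) * (1-x)^(N-m))) x := by
  set T : ℕ → ℝ := fun k => (N:ℝ) * ((N-1).choose (k-1)) * (x^(k-1) * (1-x)^(N-k)) with hT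
  have hterm : ∀ k ∈ Finset.Icc m N,
      HasDerivAt (fun y : ℝ => (N.choose k : ℝ) * y^k * (1-y)^(N-k)) (T k - T (k+1)) x := by
    intro k hk
    rw [Finset.mem_Icc] at hk
    have h1 : HasDerivAt (fun y : ℝ => (N.choose k : ℝ) * y^k)
        ((N.choose k : ℝ) * ((k:ℝ) * x^(k-1))) x := (hasDerivAt_pow k x).const_mul _
    have h2 : HasDerivAt (fun y : ℝ => (1-y)^(N-k))
        (-(((N-k : ℕ):ℝ) * (1-x)^(N-k-1))) x := by
      have := (hasDerivAt_pow (N-k) (1-x)).comp x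
        ((hasDerivAt_const x (1:ℝ)).sub (hasDerivAt_id x))
      simpa [Function.comp_def] using this
    have h3 := h1.mul h2
    convert h3 using 1
    · rfl
    · rfl
    · rfl
    have eA : ((k : ℝ)) * (N.choose k : ℝ) = (N:ℝ) * (((N-1).choose (k-1) : ℕ) : ℝ) := by
      exact_mod_cast chooseA N k (by omega) hk.2
    have eB : (((N - k : ℕ)) : ℝ) * (N.choose k : ℝ) = (N:ℝ) * (((N-1).choose k : ℕ) : ℝ) := by
      exact_mod_cast chooseB N k hk.2
    rw [hT]
    simp only [Nat.add_sub_cancel]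
    rw [show N - (k+1) = N - k - 1 by omega]
    linear_combination (-(x^(k-1)*(1-x)^(N-k))) * eA + (x^k*(1-x)^(N-k-1)) * eB
  have hsum := HasDerivAt.fun_sum hterm
  have htel : ∑ k ∈ Finset.Icc m N, (T k - T (k+1)) = T m - T (N+1) := by
    rw [← Finset.Ico_add_one_right_eq_Icc, Finset.sum_Ico_eq_sum_range]
    have h := Finset.sum_range_sub' (fun i => T (m + i)) (N + 1 - m)
    rw [Nat.add_zero, show m + (N+1-m) = N+1 by omega] at h
    exact h
  rw [htel] at hsum
  have hTN : T (N+1) = 0 := by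
    rw [hT]
    simp only [Nat.add_sub_cancel]
    rw [Nat.choose_eq_zero_of_lt (by omega : N - 1 < N)]
    simp
  rw [hTN, sub_zero] at hsum
  exact hsum

open Set intervalIntegral MeasureTheory in
theorem stmt17 (N : ℕ) (hN : 1 ≤ N) (p : ℝ) (hp0 : 0 < p) (hp1 : p < 1)
    (m : ℕ) (hm : (N : ℝ) * p = m) :
    binomialP_ge N p m > 1/2 := by
  have hN0 : (0:ℝ) < N := by exact_mod_cast hN
  have hm0R : (0:ℝ) < m := by rw [← hm]; positivity
  have hm1 : 1 ≤ m := by exact_mod_cast Nat.pos_of_ne_zero (by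
    intro h; rw [h] at hm0R; norm_num at hm0R)
  have hmltN : m < N := by
    have : (m:ℝ) < N := by rw [← hm]; nlinarith
    exact_mod_cast this
  have hp : p = (m:ℝ)/(N:ℝ) := by rw [eq_div_iff (ne_of_gt hN0)]; linarith [hm]
  obtain ⟨a, rfl⟩ : ∃ a, m = a + 1 := ⟨m - 1, by omega⟩
  obtain ⟨q, rfl⟩ : ∃ q, N = a + q + 2 := ⟨N - a - 2, by omega⟩
  -- basic p facts
  have hp2 : p^2 < p := by nlinarith
  have hp2pos : 0 < p^2 := by positivity
  -- functions
  set h : ℝ → ℝ := fun y => y^a * (1-y)^(q+1) with hhdef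
  have hcont : Continuous h := by
    exact (continuous_pow a).mul ((continuous_const.sub continuous_id).pow _)
  set c : ℝ := ((a+q+2 : ℕ):ℝ) * (((a+q+2-1).choose (a+1-1) : ℕ) : ℝ) with hcdef
  have hc0 : 0 < c := by
    apply mul_pos hN0
    exact_mod_cast Nat.choose_pos (by omega)
  set F : ℝ → ℝ := fun y => ∑ k ∈ Finset.Icc (a+1) (a+q+2), ((a+q+2).choose k : ℝ) * y^k * (1-y)^((a+q+2)-k) with hFdef
  have hge : binomialP_ge (a+q+2) p (a+1) = F p := by
    simp only [binomialP_ge, binomialPMF, hFdef]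
  have hDF : ∀ x : ℝ, HasDerivAt F (c * h x) x := by
    intro x
    have := hasDerivAt_sumF (a+q+2) (a+1) (by omega) (by omega) x
    rw [show a+1-1 = a by omega, show (a+q+2) - (a+1) = q+1 by omega] at this
    convert this using 1
    exact rfl
  have hInt : ∀ u v : ℝ, IntervalIntegrable (fun y => c * h y) volume u v :=
    fun u v => ((continuous_const.mul hcont)).intervalIntegrable u v
  have hFTC : ∀ u v : ℝ, ∫ y in u..v, c * h y = F v - F u := fun u v =>
    integral_eq_sub_of_hasDerivAt (fun x _ => hDF x) (hInt u v)
  have hF0 : F 0 = 0 := by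
    apply Finset.sum_eq_zero
    intro k hk
    rw [Finset.mem_Icc] at hk
    rw [zero_pow (by omega : k ≠ 0)]
    ring
  have hF1 : F 1 = 1 := by
    show (∑ k ∈ Finset.Icc (a+1) (a+q+2), ((a+q+2).choose k : ℝ) * 1^k * (1-1)^((a+q+2)-k)) = 1
    rw [Finset.sum_eq_single_of_mem (a+q+2) (Finset.mem_Icc.2 ⟨by omega, le_refl _⟩)]
    · simp
    · intro k hk hkne
      rw [Finset.mem_Icc] at hk
      rw [show (1:ℝ) - 1 = 0 by ring, zero_pow (by omega : (a+q+2) - k ≠ 0)]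
      ring
  -- the three subintegrals of h
  have hInth : ∀ u v : ℝ, IntervalIntegrable h volume u v := fun u v => hcont.intervalIntegrable u v
  have hsplit : (∫ y in (0:ℝ)..p^2, h y) + (∫ y in (p^2)..p, h y) = ∫ y in (0:ℝ)..p, h y :=
    integral_add_adjacent_intervals (hInth _ _) (hInth _ _)
  have hJ1pos : 0 < ∫ y in (0:ℝ)..p^2, h y := by
    apply intervalIntegral_pos_of_pos_on (hInth _ _) _ hp2pos
    intro x hx
    have hx1 : x < 1 := by nlinarith [hx.2]
    exact mul_pos (pow_pos hx.1 _) (pow_pos (by linarith) _)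
  -- the key pointwise inequality, specialized
  have klem : ∀ x : ℝ, p ≤ x → x < 1 →
      x^(2*a+q+3) * (1-x)^(q+1) ≤ p^(2*a+2) * (x - p^2)^(q+1) := by
    intro x h1 h2
    have hcast : ((a+1:ℕ):ℝ)/(((a+1:ℕ):ℝ)+((q+1:ℕ):ℝ)) = p := by
      rw [hp]; push_cast; congr 1; ring
    have := lkey (a+1) (q+1) (by omega) (by omega) (x := x) (by rw [hcast]; exact h1) h2
    rw [hcast] at this
    rw [show 2*(a+1)+(q+1) = 2*a+q+3 by ring, show 2*(a+1) = 2*a+2 by ring] at this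
    exact this
  have hx0' : ∀ x : ℝ, x ∈ Set.Icc p 1 → 0 < x := fun x hx => lt_of_lt_of_le hp0 hx.1
  -- pointwise inequality on [p,1]
  have hpoint : ∀ x ∈ Set.Icc p 1, h x ≤ (p^2/x^2) * h (p^2/x) := by
    intro x hx
    have hx0 : 0 < x := hx0' x hx
    rcases eq_or_lt_of_le hx.2 with rfl | hlt
    · have : h 1 = 0 := by rw [hhdef]; simp
      rw [this]
      apply mul_nonneg (by positivity)
      rw [hhdef]
      apply mul_nonneg (by positivity)
      apply pow_nonneg
      have : p^2/(1:ℝ) = p^2 := by ring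
      nlinarith
    · have hk := klem x hx.1 hlt
      have e2 : (p^2/x^2) * h (p^2/x) = p^(2*a+2) * (x - p^2)^(q+1) / x^(a+q+3) := by
        rw [hhdef]
        simp only
        rw [show (1 : ℝ) - p^2/x = (x - p^2)/x by field_simp]
        rw [div_pow, div_pow]
        field_simp
        ring
      rw [e2, le_div_iff₀ (pow_pos hx0 _)]
      calc h x * x^(a+q+3) = x^(2*a+q+3) * (1-x)^(q+1) := by rw [hhdef]; ring
        _ ≤ p^(2*a+2) * (x - p^2)^(q+1) := hk
  -- substitution: ∫_{p²}^p h = ∫_p^1 (p²/x²) h(p²/x) dx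
  have hsubst : (∫ y in (p^2)..p, h y) = ∫ x in p..1, (p^2/x^2) * h (p^2/x) := by
    have hder : ∀ x ∈ Set.uIcc p 1, HasDerivAt (fun x : ℝ => p^2/x) (-(p^2/x^2)) x := by
      intro x hx
      rw [Set.uIcc_of_le hp1.le] at hx
      have hx0 : x ≠ 0 := ne_of_gt (hx0' x hx)
      have hd := (hasDerivAt_inv hx0).const_mul (p^2)
      have heq : (fun y:ℝ => p^2 * y⁻¹) = fun y:ℝ => p^2/y := by
        funext y; rw [div_eq_mul_inv]
      rw [heq] at hd
      convert hd using 1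
      · rfl
      · rfl
      rw [div_eq_mul_inv]; ring
    have hcont' : ContinuousOn (fun x : ℝ => -(p^2/x^2)) (Set.uIcc p 1) := by
      rw [Set.uIcc_of_le hp1.le]
      apply ContinuousOn.neg
      apply ContinuousOn.div continuousOn_const (continuous_pow 2).continuousOn
      exact fun x hx => pow_ne_zero _ (ne_of_gt (hx0' x hx))
    have hcs := integral_comp_smul_deriv hder hcont' hcont
    have e3 : p^2/p = p := by field_simp
    have e4 : p^2/(1:ℝ) = p^2 := by ring
    rw [e3, e4] at hcs
    have e5 : ∀ x : ℝ, (-(p^2/x^2)) • ((h ∘ fun x => p^2/x) x) = -((p^2/x^2) * h (p^2/x)) := by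
      intro x; simp only [Function.comp, smul_eq_mul]; ring
    rw [intervalIntegral.integral_congr (g := fun x => -((p^2/x^2) * h (p^2/x)))
      (fun x _ => e5 x), intervalIntegral.integral_neg] at hcs
    have s2 : (∫ y in p..(p^2), h y) = -∫ y in (p^2)..p, h y :=
      intervalIntegral.integral_symm (p^2) p
    rw [s2] at hcs
    linarith [hcs]
  -- monotone comparison
  have hIg2 : IntervalIntegrable (fun x : ℝ => (p^2/x^2) * h (p^2/x)) volume p 1 := by
    apply ContinuousOn.intervalIntegrable
    rw [Set.uIcc_of_le hp1.le]
    apply ContinuousOn.mul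
    · apply ContinuousOn.div continuousOn_const (continuous_pow 2).continuousOn
      exact fun x hx => pow_ne_zero _ (ne_of_gt (hx0' x hx))
    · apply hcont.comp_continuousOn
      apply ContinuousOn.div continuousOn_const continuousOn_id
      exact fun x hx => ne_of_gt (hx0' x hx)
  have hmono : (∫ y in p..(1:ℝ), h y) ≤ ∫ x in p..1, (p^2/x^2) * h (p^2/x) :=
    integral_mono_on hp1.le (hInth _ _) hIg2 hpoint
  -- put everything together
  have hFp : F p = c * ∫ y in (0:ℝ)..p, h y := by
    rw [← intervalIntegral.integral_const_mul, hFTC 0 p, hF0, sub_zero]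
  have hFp1 : 1 - F p = c * ∫ y in p..(1:ℝ), h y := by
    rw [← intervalIntegral.integral_const_mul, hFTC p 1, hF1]
  have hchain : (∫ y in p..(1:ℝ), h y) < ∫ y in (0:ℝ)..p, h y := by
    rw [← hsplit]
    calc (∫ y in p..(1:ℝ), h y) ≤ ∫ x in p..1, (p^2/x^2) * h (p^2/x) := hmono
      _ = ∫ y in (p^2)..p, h y := hsubst.symm
      _ < (∫ y in (0:ℝ)..p^2, h y) + ∫ y in (p^2)..p, h y := by linarith
  have hfin : 1 - F p < F p := by
    rw [hFp1, hFp]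
    exact mul_lt_mul_of_pos_left hchain hc0
  rw [hge]
  linarith
end
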